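/- arXiv:1906.02326 — 3 statements merged into one kernel-verified Lean document; each statement's English description precedes it below -/
import Mathlib

section
/- If Z : G → G satisfies Z(0)=0, the Hammerstein property (Z(f₁+f+f₂) = Z(f₁+f) − Z(f) + Z(f₂+f) whenever f₁ ⊣ f₂), and the causality-preservation property (f₁ ⊣ f₂ implies Z_f(f₁) ⊣ f₂ and f₁ ⊣ Z_f(f₂), where Z_f(g) := Z(f+g) − Z(f)), and S : G → U is a generalized local S-matrix (S(0)=1 and S(f₁+f+f₂) = S(f₂+f)·S(f)⁻¹·S(f+f₁) whenever f₁ ⊣ f₂), then S ∘ Z is again a generalized local S-matrix. -/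
/-!
Write `Z_f g = Z (f + g) - Z f`. For `f₁ ⊣ f₂`, the Hammerstein property splits
`Z (f₁ + f + f₂)` as `Z_f f₁ + Z f + Z_f f₂`, and applying causality preservation twice
gives `Z_f f₁ ⊣ Z_f f₂`. The locality of `S` at the point `Z f` with the pair
`(Z_f f₁, Z_f f₂)` is then exactly the locality of `S ∘ Z` at `f` with the pair `(f₁, f₂)`.
-/

section Renormalization

variable {G : Type*} [AddCommGroup G]

def incrementAt (Z : G → G) (f g : G) : G := Z (f + g) - Z f

lemma incrementAt_add (Z : G → G) (f g : G) : incrementAt Z f g + Z f = Z (g + f) := by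
  rw [incrementAt, sub_add_cancel, add_comm]

lemma add_incrementAt (Z : G → G) (f g : G) : Z f + incrementAt Z f g = Z (f + g) :=
  add_sub_cancel _ _

lemma rel_incrementAt_incrementAt {r : G → G → Prop} {Z : G → G}
    (hZcaus : ∀ f f₁ f₂ : G, r f₁ f₂ →
      r (Z (f + f₁) - Z f) f₂ ∧ r f₁ (Z (f + f₂) - Z f))
    {f f₁ f₂ : G} (h : r f₁ f₂) : r (incrementAt Z f f₁) (incrementAt Z f f₂) :=
  (hZcaus f _ f₂ (hZcaus f f₁ f₂ h).1).2

lemma map_add_add_eq_incrementAt {r : G → G → Prop} {Z : G → G}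
    (hZH : ∀ f₁ f f₂ : G, r f₁ f₂ →
      Z (f₁ + f + f₂) = Z (f₁ + f) - Z f + Z (f₂ + f))
    {f₁ f f₂ : G} (h : r f₁ f₂) :
    Z (f₁ + f + f₂) = incrementAt Z f f₁ + Z f + incrementAt Z f f₂ := by
  rw [hZH f₁ f f₂ h, ← incrementAt_add Z f f₁, ← incrementAt_add Z f f₂]
  abel

end Renormalization

/-- If Z is a renormalization map and S a generalized local S-matrix, then
S ∘ Z is again a generalized local S-matrix. -/
theorem S_comp_Z_is_S_matrix {G U : Type*} [AddCommGroup G] [Group U]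
    (r : G → G → Prop) (Z : G → G) (S : G → U)
    (hZ0 : Z 0 = 0)
    (hZcaus : ∀ f f₁ f₂ : G, r f₁ f₂ →
      r (Z (f + f₁) - Z f) f₂ ∧ r f₁ (Z (f + f₂) - Z f))
    (hZH : ∀ f₁ f f₂ : G, r f₁ f₂ →
      Z (f₁ + f + f₂) = Z (f₁ + f) - Z f + Z (f₂ + f))
    (hS0 : S 0 = 1)
    (hSH : ∀ f₁ f f₂ : G, r f₁ f₂ →
      S (f₁ + f + f₂) = S (f₂ + f) * (S f)⁻¹ * S (f + f₁)) :
    (S ∘ Z) 0 = 1 ∧ ∀ f₁ f f₂ : G, r f₁ f₂ →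
      (S ∘ Z) (f₁ + f + f₂) = (S ∘ Z) (f₂ + f) * ((S ∘ Z) f)⁻¹ * (S ∘ Z) (f + f₁) := by
  refine ⟨by simp [hZ0, hS0], fun f₁ f f₂ h => ?_⟩
  simp only [Function.comp_apply]
  rw [map_add_add_eq_incrementAt hZH h,
    hSH _ _ _ (rel_incrementAt_incrementAt hZcaus h),
    incrementAt_add, add_incrementAt]
end

section
/- The composition of two renormalization maps is a renormalization map: if Z₁, Z₂ : G → G each satisfy Z(0)=0, the additive Hammerstein property with respect to ⊣, and causality preservation (f₁ ⊣ f₂ implies Z_f(f₁) ⊣ f₂ and f₁ ⊣ Z_f(f₂) for all f), then so does Z₁ ∘ Z₂. -/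
/-!
Writing `Z_f g = Z (f + g) - Z f`, the Hammerstein property (Z3) says exactly that `Z_f` is
additive on causal pairs, and the shifted differences of a composite obey the chain rule
`(Z₁ ∘ Z₂)_f = (Z₁)_{Z₂ f} ∘ (Z₂)_f`. Causality of `Z₂`, applied once on each side, turns a
causal pair `f₁ ⊣ f₂` into the causal pair `(Z₂)_f f₁ ⊣ (Z₂)_f f₂`, to which the additivity
of `(Z₁)_{Z₂ f}` applies.
-/

section Renormalization

variable {G : Type*} [AddCommGroup G]

/-- The paper's `Z_f`. -/
def shiftDiff (Z : G → G) (f g : G) : G := Z (f + g) - Z f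

theorem shiftDiff_comp (Z₁ Z₂ : G → G) (f g : G) :
    shiftDiff (Z₁ ∘ Z₂) f g = shiftDiff Z₁ (Z₂ f) (shiftDiff Z₂ f g) := by
  simp only [shiftDiff, Function.comp_apply, add_sub_cancel]

theorem hammerstein_iff_shiftDiff_add (Z : G → G) (f₁ f f₂ : G) :
    Z (f₁ + f + f₂) = Z (f₁ + f) - Z f + Z (f₂ + f) ↔
      shiftDiff Z f (f₁ + f₂) = shiftDiff Z f f₁ + shiftDiff Z f f₂ := by
  rw [shiftDiff, shiftDiff, shiftDiff, add_comm f₁ f, add_comm f₂ f, add_assoc,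
    sub_eq_iff_eq_add, add_assoc (Z (f + f₁) - Z f), sub_add_cancel]

structure IsRenormalization (r : G → G → Prop) (Z : G → G) : Prop where
  map_zero : Z 0 = 0
  causal : ∀ f f₁ f₂ : G, r f₁ f₂ → r (shiftDiff Z f f₁) f₂ ∧ r f₁ (shiftDiff Z f f₂)
  hammerstein : ∀ f₁ f f₂ : G, r f₁ f₂ → Z (f₁ + f + f₂) = Z (f₁ + f) - Z f + Z (f₂ + f)

namespace IsRenormalization

variable {r : G → G → Prop} {Z Z₁ Z₂ : G → G}

theorem shiftDiff_add (hZ : IsRenormalization r Z) (f : G) {f₁ f₂ : G} (h : r f₁ f₂) :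
    shiftDiff Z f (f₁ + f₂) = shiftDiff Z f f₁ + shiftDiff Z f f₂ :=
  (hammerstein_iff_shiftDiff_add Z f₁ f f₂).1 (hZ.hammerstein f₁ f f₂ h)

theorem causal_shiftDiff (hZ : IsRenormalization r Z) (f : G) {f₁ f₂ : G} (h : r f₁ f₂) :
    r (shiftDiff Z f f₁) (shiftDiff Z f f₂) :=
  (hZ.causal f _ f₂ (hZ.causal f f₁ f₂ h).1).2

theorem comp (h₁ : IsRenormalization r Z₁) (h₂ : IsRenormalization r Z₂) :
    IsRenormalization r (Z₁ ∘ Z₂) where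
  map_zero := by simp only [Function.comp_apply, h₂.map_zero, h₁.map_zero]
  causal f f₁ f₂ h := by
    obtain ⟨h_left, h_right⟩ := h₂.causal f f₁ f₂ h
    rw [shiftDiff_comp, shiftDiff_comp]
    exact ⟨(h₁.causal _ _ _ h_left).1, (h₁.causal _ _ _ h_right).2⟩
  hammerstein f₁ f f₂ h := by
    rw [hammerstein_iff_shiftDiff_add]
    calc shiftDiff (Z₁ ∘ Z₂) f (f₁ + f₂)
        = shiftDiff Z₁ (Z₂ f) (shiftDiff Z₂ f f₁ + shiftDiff Z₂ f f₂) := by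
          rw [shiftDiff_comp, h₂.shiftDiff_add f h]
      _ = shiftDiff (Z₁ ∘ Z₂) f f₁ + shiftDiff (Z₁ ∘ Z₂) f f₂ := by
          rw [h₁.shiftDiff_add _ (h₂.causal_shiftDiff f h), shiftDiff_comp, shiftDiff_comp]

end IsRenormalization

end Renormalization

/-- The composition of two renormalization maps is a renormalization map. -/
theorem renormalization_comp {G : Type*} [AddCommGroup G] (r : G → G → Prop)
    (Z₁ Z₂ : G → G)
    (hZ₁0 : Z₁ 0 = 0)
    (hZ₁caus : ∀ f f₁ f₂ : G, r f₁ f₂ →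
      r (Z₁ (f + f₁) - Z₁ f) f₂ ∧ r f₁ (Z₁ (f + f₂) - Z₁ f))
    (hZ₁H : ∀ f₁ f f₂ : G, r f₁ f₂ →
      Z₁ (f₁ + f + f₂) = Z₁ (f₁ + f) - Z₁ f + Z₁ (f₂ + f))
    (hZ₂0 : Z₂ 0 = 0)
    (hZ₂caus : ∀ f f₁ f₂ : G, r f₁ f₂ →
      r (Z₂ (f + f₁) - Z₂ f) f₂ ∧ r f₁ (Z₂ (f + f₂) - Z₂ f))
    (hZ₂H : ∀ f₁ f f₂ : G, r f₁ f₂ →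
      Z₂ (f₁ + f + f₂) = Z₂ (f₁ + f) - Z₂ f + Z₂ (f₂ + f)) :
    (Z₁ ∘ Z₂) 0 = 0 ∧
    (∀ f f₁ f₂ : G, r f₁ f₂ →
      r ((Z₁ ∘ Z₂) (f + f₁) - (Z₁ ∘ Z₂) f) f₂ ∧
        r f₁ ((Z₁ ∘ Z₂) (f + f₂) - (Z₁ ∘ Z₂) f)) ∧
    (∀ f₁ f f₂ : G, r f₁ f₂ →
      (Z₁ ∘ Z₂) (f₁ + f + f₂) =
        (Z₁ ∘ Z₂) (f₁ + f) - (Z₁ ∘ Z₂) f + (Z₁ ∘ Z₂) (f₂ + f)) := by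
  obtain ⟨map_zero, causal, hammerstein⟩ :=
    IsRenormalization.comp (r := r) ⟨hZ₁0, hZ₁caus, hZ₁H⟩ ⟨hZ₂0, hZ₂caus, hZ₂H⟩
  exact ⟨map_zero, causal, hammerstein⟩
end

section
/- Let ⊣ be a binary relation on an abelian group G compatible with addition and containing 0 in every polar (g ⊣ 0 and 0 ⊣ g for all g). If S : G → U satisfies S(0)=1 and the noncommutative Hammerstein property, then for any fixed a ∈ G, the relative S-matrix S_a(b) := S(a)⁻¹·S(a+b) satisfies S_a(0)=1 and is causality multiplicative: S_a(b₁+b₂) = S_a(b₁)·S_a(b₂) whenever b₂ ⊣ b₁. -/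
section RelativeSMatrix

variable {G U : Type*} [AddCommGroup G] [Group U]

def IsHammerstein (r : G → G → Prop) (S : G → U) : Prop :=
  ∀ f₁ f f₂ : G, r f₁ f₂ → S (f₁ + f + f₂) = S (f₂ + f) * (S f)⁻¹ * S (f + f₁)

def relativeSMatrix (S : G → U) (a b : G) : U :=
  (S a)⁻¹ * S (a + b)

theorem relativeSMatrix_zero (S : G → U) (a : G) : relativeSMatrix S a 0 = 1 := by
  simp [relativeSMatrix]

theorem IsHammerstein.relativeSMatrix_add {r : G → G → Prop} {S : G → U}
    (hS : IsHammerstein r S) (a : G) {b₁ b₂ : G} (h : r b₂ b₁) :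
    relativeSMatrix S a (b₁ + b₂) = relativeSMatrix S a b₁ * relativeSMatrix S a b₂ := by
  have hsplit : a + (b₁ + b₂) = b₂ + a + b₁ := by abel
  simp only [relativeSMatrix]
  rw [hsplit, hS b₂ a b₁ h, add_comm b₁ a]
  group

end RelativeSMatrix

theorem relative_S_matrix_general {G U : Type*} [AddCommGroup G] [Group U]
    (r : G → G → Prop)
    (S : G → U)
    (hH : ∀ f₁ f f₂ : G, r f₁ f₂ →
      S (f₁ + f + f₂) = S (f₂ + f) * (S f)⁻¹ * S (f + f₁))
    (a : G) :
    (S a)⁻¹ * S (a + 0) = 1 ∧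
    ∀ b₁ b₂ : G, r b₂ b₁ →
      (S a)⁻¹ * S (a + (b₁ + b₂)) =
        ((S a)⁻¹ * S (a + b₁)) * ((S a)⁻¹ * S (a + b₂)) :=
  ⟨relativeSMatrix_zero S a, fun _ _ h => IsHammerstein.relativeSMatrix_add hH a h⟩

/-- The relative S-matrix S_a(b) = S(a)⁻¹·S(a+b) preserves the unit and is
causality multiplicative. -/
theorem relative_S_matrix {G U : Type*} [AddCommGroup G] [Group U]
    (r : G → G → Prop)
    (h0L : ∀ g : G, r 0 g) (h0R : ∀ g : G, r g 0)
    (S : G → U) (h0 : S 0 = 1)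
    (hH : ∀ f₁ f f₂ : G, r f₁ f₂ →
      S (f₁ + f + f₂) = S (f₂ + f) * (S f)⁻¹ * S (f + f₁))
    (a : G) :
    (S a)⁻¹ * S (a + 0) = 1 ∧
    ∀ b₁ b₂ : G, r b₂ b₁ →
      (S a)⁻¹ * S (a + (b₁ + b₂)) =
        ((S a)⁻¹ * S (a + b₁)) * ((S a)⁻¹ * S (a + b₂)) :=
  relative_S_matrix_general r S hH a
end
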